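/- Let (Ω, μ) be a probability space, let C₁, …, C_g be mutually independent random variables on Ω taking values in {0,1}, and let Y be a random variable on Ω taking values in a standard Borel space. Then the information loss from marginalizing group probabilities to bit probabilities satisfies I_g − I_b = (1/g)·Σ_{i=2}^{g} I(C_i ; (C₁,…,C_{i−1}) | Y) ≥ 0, where I_g := (1/g)·I(C₁,…,C_g ; Y) and I_b := (1/g)·Σ_{i=1}^{g} I(C_i ; Y). -/

import Mathlib

/-!
Write `V = (C₁, …, C_g)`. Since every mutual information is a difference of entropies, the
identity follows from two chain rules: `H(V) = ∑ᵢ H(Cᵢ)` by independence, and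
`H(V | Y) = ∑ᵢ H(Cᵢ | C_{<i}, Y)`. Nonnegativity is "conditioning reduces entropy",
`H(Cᵢ | C_{<i}, Y) ≤ H(Cᵢ | Y)`.

All these conditional entropies are read off the single kernel `κ = condDistrib V Y μ`: given
`Y = y`, each one is a finite entropy computed from the weights of `κ y` (conditioning further on
a function of `V` amounts to disintegrating the image of `κ`). The chain rules and the inequality
then reduce to finite statements: the grouping property of `negMulLog` and Jensen's inequality
for it.
-/

open MeasureTheory ProbabilityTheory Real

/-- Shannon entropy of a measure on a finite measurable space. -/
noncomputable def measEntropy {S : Type*} [Fintype S] [MeasurableSpace S]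
    (ν : Measure S) : ℝ :=
  - ∑ s : S, ((ν {s}).toReal * Real.log (ν {s}).toReal)

/-- Shannon entropy `H(X)` of a random variable with values in a finite set. -/
noncomputable def entropyRV {Ω : Type*} [MeasurableSpace Ω] (μ : Measure Ω)
    {S : Type*} [Fintype S] [MeasurableSpace S] (X : Ω → S) : ℝ :=
  measEntropy (μ.map X)

/-- Conditional Shannon entropy `H(X | Y)` of a finitely-valued random variable `X`
given a random variable `Y`, defined via the conditional distribution of `X` given `Y`. -/
noncomputable def condEntropyRV {Ω : Type*} [MeasurableSpace Ω] (μ : Measure Ω)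
    [IsFiniteMeasure μ]
    {S : Type*} [Fintype S] [MeasurableSpace S] [StandardBorelSpace S] [Nonempty S]
    {β : Type*} [MeasurableSpace β] (X : Ω → S) (Y : Ω → β) : ℝ :=
  ∫ y, measEntropy (condDistrib X Y μ y) ∂(μ.map Y)

/-- Mutual information `I(X ; Y) = H(X) - H(X | Y)`. -/
noncomputable def mutualInfoRV {Ω : Type*} [MeasurableSpace Ω] (μ : Measure Ω)
    [IsFiniteMeasure μ]
    {S : Type*} [Fintype S] [MeasurableSpace S] [StandardBorelSpace S] [Nonempty S]
    {β : Type*} [MeasurableSpace β] (X : Ω → S) (Y : Ω → β) : ℝ :=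
  entropyRV μ X - condEntropyRV μ X Y

/-- Conditional mutual information `I(X ; W | Y) = H(X | Y) - H(X | (W, Y))`. -/
noncomputable def condMutualInfoRV {Ω : Type*} [MeasurableSpace Ω] (μ : Measure Ω)
    [IsFiniteMeasure μ]
    {S : Type*} [Fintype S] [MeasurableSpace S] [StandardBorelSpace S] [Nonempty S]
    {T : Type*} [MeasurableSpace T]
    {β : Type*} [MeasurableSpace β] (X : Ω → S) (W : Ω → T) (Y : Ω → β) : ℝ :=
  condEntropyRV μ X Y - condEntropyRV μ X (fun ω => (W ω, Y ω))

section FiniteEntropy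

open Finset

variable {S T U : Type*} [Fintype S]

open Classical in
noncomputable def pushWeights (p : S → ℝ) (f : S → T) (t : T) : ℝ :=
  ∑ s with f s = t, p s

noncomputable def finEntropy (p : S → ℝ) : ℝ :=
  ∑ s, negMulLog (p s)

/-- `H(h | f)` under the weights `p`. -/
noncomputable def finCondEntropy [Fintype T] [Fintype U] (p : S → ℝ) (f : S → T) (h : S → U) :
    ℝ :=
  ∑ t, ∑ u, pushWeights p f t *
    negMulLog (pushWeights p (fun s => (f s, h s)) (t, u) / pushWeights p f t)

lemma measurable_finEntropy : Measurable (finEntropy : (S → ℝ) → ℝ) := by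
  unfold finEntropy
  fun_prop

lemma pushWeights_nonneg {p : S → ℝ} (hp : ∀ s, 0 ≤ p s) (f : S → T) (t : T) :
    0 ≤ pushWeights p f t :=
  sum_nonneg fun s _ => hp s

lemma pushWeights_congr {T' : Type*} (p : S → ℝ) {f : S → T} {f' : S → T'} {t : T} {t' : T'}
    (H : ∀ s, f s = t ↔ f' s = t') : pushWeights p f t = pushWeights p f' t' := by
  unfold pushWeights
  congr 1
  ext s
  simp only [mem_filter, mem_univ, true_and, H s]

lemma pushWeights_id (p : S → ℝ) : pushWeights p (fun s => s) = p := by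
  classical
  ext s
  rw [pushWeights, sum_filter]
  exact (sum_ite_eq' univ s p).trans (if_pos (mem_univ s))

lemma pushWeights_of_subsingleton [Subsingleton T] {p : S → ℝ} (f : S → T) (t : T) :
    pushWeights p f t = ∑ s, p s := by
  simp [pushWeights, Subsingleton.elim _ t]

lemma pushWeights_eq_zero_of_notMem_range {p : S → ℝ} {f : S → T} {t : T}
    (ht : t ∉ Set.range f) : pushWeights p f t = 0 := by
  classical
  exact sum_eq_zero fun s hs => absurd ⟨s, (mem_filter.1 hs).2⟩ ht

lemma pushWeights_comp_of_injective {T' : Type*} {e : T → T'} (he : Function.Injective e)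
    (p : S → ℝ) (f : S → T) (t : T) :
    pushWeights p (fun s => e (f s)) (e t) = pushWeights p f t :=
  pushWeights_congr p fun _ => he.eq_iff

lemma sum_pushWeights_mul [Fintype T] (p : S → ℝ) (f : S → T) (F : T → ℝ) :
    ∑ t, pushWeights p f t * F t = ∑ s, p s * F (f s) := by
  classical
  rw [← sum_fiberwise univ f (fun s => p s * F (f s))]
  refine sum_congr rfl fun t _ => ?_
  rw [pushWeights, sum_mul]
  exact sum_congr rfl fun s hs => by rw [(mem_filter.1 hs).2]

lemma sum_pushWeights [Fintype T] (p : S → ℝ) (f : S → T) :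
    ∑ t, pushWeights p f t = ∑ s, p s := by
  classical
  exact sum_fiberwise univ f p

lemma pushWeights_mem_stdSimplex [Fintype T] {p : S → ℝ} (hp : p ∈ stdSimplex ℝ S)
    (f : S → T) : pushWeights p f ∈ stdSimplex ℝ T :=
  ⟨pushWeights_nonneg hp.1 f, (sum_pushWeights p f).trans hp.2⟩

lemma sum_snd_pushWeights_pair [Fintype U] (p : S → ℝ) (f : S → T) (h : S → U) (t : T) :
    ∑ u, pushWeights p (fun s => (f s, h s)) (t, u) = pushWeights p f t := by
  classical
  simp only [pushWeights, Prod.mk.injEq]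
  rw [← sum_fiberwise (univ.filter (f · = t)) h p]
  simp [filter_filter]

lemma sum_fst_pushWeights_pair [Fintype T] (p : S → ℝ) (f : S → T) (h : S → U) (u : U) :
    ∑ t, pushWeights p (fun s => (f s, h s)) (t, u) = pushWeights p h u := by
  classical
  simp only [pushWeights, Prod.mk.injEq]
  rw [← sum_fiberwise (univ.filter (h · = u)) f p]
  simp [filter_filter, and_comm]

lemma pushWeights_pair_le [Fintype U] {p : S → ℝ} (hp : ∀ s, 0 ≤ p s) (f : S → T) (h : S → U)
    (t : T) (u : U) : pushWeights p (fun s => (f s, h s)) (t, u) ≤ pushWeights p f t :=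
  sum_snd_pushWeights_pair p f h t ▸
    single_le_sum (fun u _ => pushWeights_nonneg hp _ (t, u)) (mem_univ u)

lemma pushWeights_mul_pushWeights_pair_div [Fintype U] {p : S → ℝ} (hp : ∀ s, 0 ≤ p s)
    (f : S → T) (h : S → U) (t : T) (u : U) :
    pushWeights p f t * (pushWeights p (fun s => (f s, h s)) (t, u) / pushWeights p f t) =
      pushWeights p (fun s => (f s, h s)) (t, u) := by
  rcases eq_or_ne (pushWeights p f t) 0 with h0 | h0
  · rw [h0, zero_mul]
    exact (le_antisymm (h0 ▸ pushWeights_pair_le hp f h t u) (pushWeights_nonneg hp _ _)).symm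
  · exact mul_div_cancel₀ _ h0

lemma finEntropy_nonneg {p : S → ℝ} (hp : p ∈ stdSimplex ℝ S) : 0 ≤ finEntropy p :=
  sum_nonneg fun s _ =>
    negMulLog_nonneg (hp.1 s) (hp.2 ▸ single_le_sum (fun s _ => hp.1 s) (mem_univ s))

lemma finEntropy_le_card {p : S → ℝ} (hp : ∀ s, 0 ≤ p s) : finEntropy p ≤ Fintype.card S := by
  rw [← card_univ, ← nsmul_one, ← sum_const]
  exact sum_le_sum fun s _ => (negMulLog_le_one_sub_self (hp s)).trans (by linarith [hp s])

lemma abs_finEntropy_le_card {p : S → ℝ} (hp : p ∈ stdSimplex ℝ S) :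
    |finEntropy p| ≤ Fintype.card S :=
  abs_le.2 ⟨by linarith [finEntropy_nonneg hp, (Fintype.card S).cast_nonneg (α := ℝ)],
    finEntropy_le_card hp.1⟩

lemma finEntropy_of_subsingleton [Subsingleton S] {p : S → ℝ} (hp : p ∈ stdSimplex ℝ S) :
    finEntropy p = 0 :=
  sum_eq_zero fun s _ => by rw [← Fintype.sum_subsingleton p s, hp.2, negMulLog_one]

lemma finEntropy_pushWeights_comp_of_injective {T' : Type*} [Fintype T] [Fintype T']
    {e : T → T'} (he : Function.Injective e) (p : S → ℝ) (f : S → T) :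
    finEntropy (pushWeights p (fun s => e (f s))) = finEntropy (pushWeights p f) := by
  refine (Fintype.sum_of_injective e he _ _ (fun t' ht' => ?_) fun t => ?_).symm
  · rw [pushWeights_eq_zero_of_notMem_range fun ⟨s, hs⟩ => ht' ⟨f s, hs⟩, negMulLog_zero]
  · rw [pushWeights_comp_of_injective he]

lemma sum_negMulLog_eq_negMulLog_sum_add {q : S → ℝ} (hq : ∀ s, 0 ≤ q s) :
    ∑ s, negMulLog (q s) =
      negMulLog (∑ s, q s) + ∑ s, (∑ s', q s') * negMulLog (q s / ∑ s', q s') := by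
  set a := ∑ s', q s'
  rcases eq_or_ne a 0 with ha | ha
  · have hzero : ∀ s, q s = 0 := fun s =>
      (sum_eq_zero_iff_of_nonneg fun s _ => hq s).1 ha s (mem_univ s)
    simp [ha, hzero]
  · have hsplit : ∀ s, negMulLog (q s) = q s / a * negMulLog a + a * negMulLog (q s / a) := by
      intro s
      rw [← negMulLog_mul, mul_div_cancel₀ _ ha]
    rw [sum_congr rfl fun s _ => hsplit s, sum_add_distrib, ← sum_mul, ← sum_div, div_self ha,
      one_mul]

lemma finEntropy_pushWeights_pair [Fintype T] [Fintype U] {p : S → ℝ} (hp : ∀ s, 0 ≤ p s)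
    (f : S → T) (h : S → U) :
    finEntropy (pushWeights p (fun s => (f s, h s))) =
      finEntropy (pushWeights p f) + finCondEntropy p f h := by
  simp only [finEntropy, finCondEntropy, Fintype.sum_prod_type, ← sum_add_distrib]
  refine sum_congr rfl fun t _ => ?_
  rw [sum_negMulLog_eq_negMulLog_sum_add fun u => pushWeights_nonneg hp _ (t, u),
    sum_snd_pushWeights_pair]

lemma finCondEntropy_nonneg [Fintype T] [Fintype U] {p : S → ℝ} (hp : ∀ s, 0 ≤ p s)
    (f : S → T) (h : S → U) : 0 ≤ finCondEntropy p f h := by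
  refine sum_nonneg fun t _ => sum_nonneg fun u _ =>
    mul_nonneg (pushWeights_nonneg hp f t) (negMulLog_nonneg ?_ ?_)
  · exact div_nonneg (pushWeights_nonneg hp _ _) (pushWeights_nonneg hp f t)
  · exact div_le_one_of_le₀ (pushWeights_pair_le hp f h t u) (pushWeights_nonneg hp f t)

lemma finCondEntropy_le [Fintype T] [Fintype U] {p : S → ℝ} (hp : p ∈ stdSimplex ℝ S)
    (f : S → T) (h : S → U) : finCondEntropy p f h ≤ finEntropy (pushWeights p h) := by
  rw [finCondEntropy, sum_comm]
  refine sum_le_sum fun u _ => ?_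
  have hjensen := concaveOn_negMulLog.le_map_sum (t := univ) (w := pushWeights p f)
    (p := fun t => pushWeights p (fun s => (f s, h s)) (t, u) / pushWeights p f t)
    (fun t _ => pushWeights_nonneg hp.1 f t) ((sum_pushWeights p f).trans hp.2)
    (fun t _ => div_nonneg (pushWeights_nonneg hp.1 _ _) (pushWeights_nonneg hp.1 f t))
  simpa only [smul_eq_mul, pushWeights_mul_pushWeights_pair_div hp.1, sum_fst_pushWeights_pair]
    using hjensen

lemma abs_finCondEntropy_le_card [Fintype T] [Fintype U] {p : S → ℝ} (hp : p ∈ stdSimplex ℝ S)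
    (f : S → T) (h : S → U) : |finCondEntropy p f h| ≤ Fintype.card U :=
  abs_le.2 ⟨by linarith [finCondEntropy_nonneg hp.1 f h, (Fintype.card U).cast_nonneg (α := ℝ)],
    (finCondEntropy_le hp f h).trans (finEntropy_le_card (pushWeights_nonneg hp.1 h))⟩

lemma finCondEntropy_eq_sum_mul_finEntropy [Fintype T] [Fintype U] {p : S → ℝ}
    {f : S → T} {h : S → U} {r : T → U → ℝ}
    (hr : ∀ t u, pushWeights p (fun s => (f s, h s)) (t, u) = pushWeights p f t * r t u) :
    finCondEntropy p f h = ∑ t, pushWeights p f t * finEntropy (r t) := by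
  refine sum_congr rfl fun t _ => ?_
  rw [finEntropy, mul_sum]
  refine sum_congr rfl fun u _ => ?_
  rcases eq_or_ne (pushWeights p f t) 0 with h0 | h0
  · simp [h0]
  · rw [hr, mul_div_cancel_left₀ _ h0]

lemma finCondEntropy_eq_of_mul [Fintype T] [Fintype U] {p : S → ℝ} (hp : ∑ s, p s = 1)
    {f : S → T} {h : S → U}
    (hmul : ∀ t u, pushWeights p (fun s => (f s, h s)) (t, u) =
      pushWeights p f t * pushWeights p h u) :
    finCondEntropy p f h = finEntropy (pushWeights p h) := by
  rw [finCondEntropy_eq_sum_mul_finEntropy hmul, ← sum_mul, sum_pushWeights, hp, one_mul]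

lemma finCondEntropy_of_subsingleton [Fintype T] [Fintype U] [Subsingleton T] {p : S → ℝ}
    (hp : ∑ s, p s = 1) (f : S → T) (h : S → U) :
    finCondEntropy p f h = finEntropy (pushWeights p h) := by
  refine finCondEntropy_eq_of_mul hp fun t u => ?_
  rw [pushWeights_of_subsingleton f, hp, one_mul]
  exact pushWeights_congr p fun s => by simp [Subsingleton.elim (f s) t]

lemma finEntropy_pushWeights_prefix {A : Type*} [Fintype A] {n : ℕ} {p : (Fin n → A) → ℝ}
    (hp : p ∈ stdSimplex ℝ (Fin n → A)) (k : ℕ) (hk : k ≤ n) :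
    finEntropy (pushWeights p fun v (j : Fin k) => v (Fin.castLE hk j)) =
      ∑ i : Fin k, finCondEntropy p (fun v (j : Fin i) => v (Fin.castLE (i.isLt.le.trans hk) j))
        (fun v => v (Fin.castLE hk i)) := by
  induction k with
  | zero => simp [finEntropy_of_subsingleton (pushWeights_mem_stdSimplex hp _)]
  | succ k ih =>
    have hk' := Nat.le_of_succ_le hk
    calc finEntropy (pushWeights p fun v (j : Fin (k + 1)) => v (Fin.castLE hk j))
        = finEntropy (pushWeights p fun v =>
            ((fun j : Fin k => v (Fin.castLE hk' j)), v (Fin.castLE hk (Fin.last k)))) :=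
          (finEntropy_pushWeights_comp_of_injective
            (Prod.swap_injective.comp (Fin.snocEquiv fun _ => A).symm.injective) p _).symm
      _ = _ := by
          rw [finEntropy_pushWeights_pair hp.1, ih hk', Fin.sum_univ_castSucc]
          rfl

lemma finEntropy_eq_sum_finCondEntropy {A : Type*} [Fintype A] {n : ℕ}
    {p : (Fin n → A) → ℝ} (hp : p ∈ stdSimplex ℝ (Fin n → A)) :
    finEntropy p = ∑ i : Fin n,
      finCondEntropy p (fun v (j : Fin i) => v (Fin.castLE i.isLt.le j)) (fun v => v i) := by
  simpa [pushWeights_id] using finEntropy_pushWeights_prefix hp n le_rfl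

end FiniteEntropy

section ProbMass

open Finset

variable {S : Type*} [MeasurableSpace S]

noncomputable def probMass (ν : Measure S) (s : S) : ℝ := ν.real {s}

lemma measEntropy_eq_finEntropy [Fintype S] (ν : Measure S) :
    measEntropy ν = finEntropy (probMass ν) := by
  simp only [measEntropy, finEntropy, probMass, negMulLog, measureReal_def, ← sum_neg_distrib]
  exact sum_congr rfl fun s _ => by ring

variable [MeasurableSingletonClass S]

lemma Measurable.probMass {α : Type*} [MeasurableSpace α] {ν : α → Measure S}
    (hν : Measurable ν) : Measurable fun a => probMass (ν a) :=
  measurable_pi_lambda _ fun s =>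
    ((Measure.measurable_coe (measurableSet_singleton s)).comp hν).ennreal_toReal

variable [Fintype S]

lemma probMass_mem_stdSimplex (ν : Measure S) [IsProbabilityMeasure ν] :
    probMass ν ∈ stdSimplex ℝ S :=
  ⟨fun _ => measureReal_nonneg, by simp [probMass]⟩

lemma probMass_map {T : Type*} [MeasurableSpace T] [MeasurableSingletonClass T]
    (ν : Measure S) [IsFiniteMeasure ν] (f : S → T) :
    probMass (ν.map f) = pushWeights (probMass ν) f := by
  ext t
  rw [probMass, map_measureReal_apply .of_discrete (measurableSet_singleton t), pushWeights]
  simp only [probMass]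
  rw [sum_measureReal_singleton]
  congr 1
  ext s
  simp

lemma integrable_comp_probMass {α : Type*} [MeasurableSpace α] {M : Measure α}
    [IsFiniteMeasure M] {ν : α → Measure S} (hν : Measurable ν)
    (hprob : ∀ a, IsProbabilityMeasure (ν a)) {Φ : (S → ℝ) → ℝ} (hΦ : Measurable Φ) {c : ℝ}
    (hc : ∀ p ∈ stdSimplex ℝ S, |Φ p| ≤ c) : Integrable (fun a => Φ (probMass (ν a))) M :=
  .of_bound (hΦ.comp hν.probMass).aestronglyMeasurable c
    (.of_forall fun a => hc _ (probMass_mem_stdSimplex (ν a)))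

lemma pushWeights_pair_probMass_eq_mul_condKernel {β T U : Type*} [MeasurableSpace β]
    [Fintype T] [MeasurableSpace T] [MeasurableSingletonClass T] [MeasurableSpace U]
    [StandardBorelSpace U] [Nonempty U] (κ : Kernel β S) [IsFiniteKernel κ] (f : S → T)
    (h : S → U) (y : β) (t : T) (u : U) :
    pushWeights (probMass (κ y)) (fun s => (f s, h s)) (t, u) =
      pushWeights (probMass (κ y)) f t *
        probMass ((κ.map fun s => (f s, h s)).condKernel (y, t)) u := by
  have hdis : (κ.map fun s => (f s, h s)) y {(t, u)} =
      (κ.map f) y {t} * (κ.map fun s => (f s, h s)).condKernel (y, t) {u} := by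
    conv_lhs => rw [← Set.singleton_prod_singleton, ← Kernel.disintegrate (κ.map _)
      (κ.map fun s => (f s, h s)).condKernel]
    rw [Kernel.compProd_apply_prod (measurableSet_singleton t) (measurableSet_singleton u),
      lintegral_singleton, Kernel.fst_map_prod _ .of_discrete, mul_comm]
  rw [← probMass_map, ← probMass_map, ← Kernel.map_apply _ .of_discrete,
    ← Kernel.map_apply _ .of_discrete]
  simp only [probMass, measureReal_def, hdis, ENNReal.toReal_mul]

end ProbMass

section Entropy

variable {Ω S T U : Type*} [MeasurableSpace Ω] {μ : Measure Ω} [IsFiniteMeasure μ]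
  [Fintype S] [MeasurableSpace S] [MeasurableSingletonClass S] {V : Ω → S}

lemma entropyRV_comp [Fintype U] [MeasurableSpace U] [MeasurableSingletonClass U]
    (hV : Measurable V) (h : S → U) :
    entropyRV μ (fun ω => h (V ω)) = finEntropy (pushWeights (probMass (μ.map V)) h) := by
  rw [← probMass_map, ← measEntropy_eq_finEntropy, Measure.map_map .of_discrete hV]
  rfl

lemma pushWeights_probMass_map_of_indepFun [MeasurableSpace T] [MeasurableSingletonClass T]
    [MeasurableSpace U] [MeasurableSingletonClass U] (hV : Measurable V) {f : S → T}
    {h : S → U} (hind : IndepFun (fun ω => f (V ω)) (fun ω => h (V ω)) μ) (t : T) (u : U) :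
    pushWeights (probMass (μ.map V)) (fun s => (f s, h s)) (t, u) =
      pushWeights (probMass (μ.map V)) f t * pushWeights (probMass (μ.map V)) h u := by
  simp only [← probMass_map, Measure.map_map .of_discrete hV, probMass]
  rw [← Set.singleton_prod_singleton, ← measureReal_prod_prod]
  congr 1
  exact (indepFun_iff_map_prod_eq_prod_map_map (by fun_prop) (by fun_prop)).1 hind

end Entropy

section CondEntropy

variable {Ω β S T U : Type*} [MeasurableSpace Ω] [MeasurableSpace β] {μ : Measure Ω}
  [IsFiniteMeasure μ] [MeasurableSpace S] [StandardBorelSpace S] [Nonempty S]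

lemma hasCondDistrib_condDistrib {V : Ω → S} {Y : Ω → β} (hV : Measurable V)
    (hY : Measurable Y) : HasCondDistrib V Y (condDistrib V Y μ) μ :=
  ⟨by fun_prop, (compProd_map_condDistrib hV.aemeasurable).symm⟩

variable [Fintype S]

lemma condEntropyRV_eq_integral_of_hasCondDistrib {X : Ω → S} {W : Ω → β}
    {η : Kernel β S} [IsFiniteKernel η] (h : HasCondDistrib X W η μ) :
    condEntropyRV μ X W = ∫ w, measEntropy (η w) ∂μ.map W := by
  refine integral_congr_ae ?_
  filter_upwards [condDistrib_ae_eq_of_measure_eq_compProd W h.aemeasurable_snd h.map_eq]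
    with w hw
  rw [hw]

variable {V : Ω → S} {Y : Ω → β}

lemma integrable_finEntropy_pushWeights_condDistrib [Fintype U] (h : S → U) :
    Integrable (fun y => finEntropy (pushWeights (probMass (condDistrib V Y μ y)) h))
      (μ.map Y) :=
  integrable_comp_probMass (Kernel.measurable _) (fun _ => inferInstance)
    (by unfold finEntropy pushWeights; fun_prop)
    fun _ hp => abs_finEntropy_le_card (pushWeights_mem_stdSimplex hp h)

lemma integrable_finCondEntropy_condDistrib [Fintype T] [Fintype U] (f : S → T) (h : S → U) :
    Integrable (fun y => finCondEntropy (probMass (condDistrib V Y μ y)) f h) (μ.map Y) :=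
  integrable_comp_probMass (Kernel.measurable _) (fun _ => inferInstance)
    (by unfold finCondEntropy pushWeights; fun_prop) fun _ hp => abs_finCondEntropy_le_card hp f h

variable [Fintype U] [MeasurableSpace U] [StandardBorelSpace U] [Nonempty U]

lemma condEntropyRV_comp (hV : Measurable V) (hY : Measurable Y) (h : S → U) :
    condEntropyRV μ (fun ω => h (V ω)) Y =
      ∫ y, finEntropy (pushWeights (probMass (condDistrib V Y μ y)) h) ∂μ.map Y := by
  refine (condEntropyRV_eq_integral_of_hasCondDistrib
    ((hasCondDistrib_condDistrib hV hY).comp_left (.of_discrete (f := h)))).trans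
    (integral_congr_ae (.of_forall fun y => ?_))
  dsimp only
  rw [Kernel.map_apply _ .of_discrete, measEntropy_eq_finEntropy, probMass_map]

variable [Fintype T] [MeasurableSpace T] [MeasurableSingletonClass T]

/- The conditional law of `h ∘ V` given `(f ∘ V, Y)` is obtained by disintegrating the image of
`condDistrib V Y μ` under `(f, h)` along its first coordinate. -/
lemma condEntropyRV_comp_pair (hV : Measurable V) (hY : Measurable Y) (f : S → T) (h : S → U) :
    condEntropyRV μ (fun ω => h (V ω)) (fun ω => (f (V ω), Y ω)) =
      ∫ y, finCondEntropy (probMass (condDistrib V Y μ y)) f h ∂μ.map Y := by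
  set κ := condDistrib V Y μ
  set η := (κ.map fun s => (f s, h s)).condKernel
  have hη : HasCondDistrib (fun ω => h (V ω)) (fun ω => (f (V ω), Y ω))
      (η.comap Prod.swap measurable_swap) μ := by
    have hpair : HasCondDistrib (fun ω => (f (V ω), h (V ω))) Y
        ((κ.map fun s => (f s, h s)).fst ⊗ₖ η) μ := by
      rw [Kernel.disintegrate]
      exact (hasCondDistrib_condDistrib hV hY).comp_left (.of_discrete (f := fun s => (f s, h s)))
    exact hpair.of_compProd.measurableEquiv_comp_right (MeasurableEquiv.prodComm (α := β) (β := T))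
  have hν : Measurable fun z : β × S => η (z.1, f z.2) :=
    η.measurable.comp (measurable_fst.prodMk (Measurable.of_discrete.comp measurable_snd))
  calc condEntropyRV μ (fun ω => h (V ω)) (fun ω => (f (V ω), Y ω))
      = ∫ z, finEntropy (probMass (η (z.1, f z.2))) ∂μ.map fun ω => (Y ω, V ω) := by
        simp_rw [condEntropyRV_eq_integral_of_hasCondDistrib hη, measEntropy_eq_finEntropy]
        rw [integral_map (by fun_prop) ?_, integral_map (by fun_prop) ?_]
        · rfl
        · exact (measurable_finEntropy.comp hν.probMass).aestronglyMeasurable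
        · exact (measurable_finEntropy.comp (Kernel.measurable _).probMass).aestronglyMeasurable
    _ = ∫ y, ∫ v, finEntropy (probMass (η (y, f v))) ∂κ y ∂μ.map Y := by
        rw [← compProd_map_condDistrib hV.aemeasurable]
        exact Measure.integral_compProd (integrable_comp_probMass hν (fun _ => inferInstance)
          measurable_finEntropy fun _ hp => abs_finEntropy_le_card hp)
    _ = _ := by
        refine integral_congr_ae (.of_forall fun y => ?_)
        dsimp only
        rw [integral_fintype .of_finite, finCondEntropy_eq_sum_mul_finEntropy
          (pushWeights_pair_probMass_eq_mul_condKernel κ f h y), sum_pushWeights_mul]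
        rfl

lemma condEntropyRV_comp_pair_le (hV : Measurable V) (hY : Measurable Y) (f : S → T)
    (h : S → U) :
    condEntropyRV μ (fun ω => h (V ω)) (fun ω => (f (V ω), Y ω)) ≤
      condEntropyRV μ (fun ω => h (V ω)) Y := by
  rw [condEntropyRV_comp_pair hV hY, condEntropyRV_comp hV hY]
  exact integral_mono (integrable_finCondEntropy_condDistrib f h)
    (integrable_finEntropy_pushWeights_condDistrib h)
    fun y => finCondEntropy_le (probMass_mem_stdSimplex _) f h

lemma condEntropyRV_comp_pair_of_subsingleton [Subsingleton T] (hV : Measurable V)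
    (hY : Measurable Y) (f : S → T) (h : S → U) :
    condEntropyRV μ (fun ω => h (V ω)) (fun ω => (f (V ω), Y ω)) =
      condEntropyRV μ (fun ω => h (V ω)) Y := by
  rw [condEntropyRV_comp_pair hV hY, condEntropyRV_comp hV hY]
  exact integral_congr_ae (.of_forall fun y =>
    finCondEntropy_of_subsingleton (probMass_mem_stdSimplex _).2 f h)

end CondEntropy

section Sequences

variable {Ω β A : Type*} [MeasurableSpace Ω] [MeasurableSpace β] {μ : Measure Ω}
  [MeasurableSpace A] {n : ℕ} {C : Fin n → Ω → A}

lemma ProbabilityTheory.iIndepFun.indepFun_finPrefix (hind : iIndepFun C μ)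
    (hC : ∀ i, Measurable (C i)) (i : Fin n) :
    IndepFun (fun ω (j : Fin i) => C (Fin.castLE i.isLt.le j) ω) (C i) μ := by
  have hblocks := hind.indepFun_finset (Finset.Iio i) {i}
    (Finset.disjoint_singleton_right.2 (by simp)) hC
  have hφ : Measurable fun (w : Finset.Iio i → A) (j : Fin i) =>
      w ⟨Fin.castLE i.isLt.le j, by simp [Fin.lt_def]⟩ :=
    measurable_pi_lambda _ fun _ => measurable_pi_apply _
  have hψ : Measurable fun w : ({i} : Finset (Fin n)) → A => w ⟨i, Finset.mem_singleton_self i⟩ :=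
    measurable_pi_apply _
  exact hblocks.comp hφ hψ

lemma entropyRV_pi_eq_sum_of_iIndepFun [Fintype A] [MeasurableSingletonClass A]
    [IsProbabilityMeasure μ] (hind : iIndepFun C μ) (hC : ∀ i, Measurable (C i)) :
    entropyRV μ (fun ω i => C i ω) = ∑ i, entropyRV μ (C i) := by
  have hV : Measurable fun ω i => C i ω := measurable_pi_lambda _ hC
  have := Measure.isProbabilityMeasure_map (μ := μ) hV.aemeasurable
  have hP := probMass_mem_stdSimplex (μ.map fun ω i => C i ω)
  calc entropyRV μ (fun ω i => C i ω)
      = ∑ i : Fin n, finCondEntropy (probMass (μ.map fun ω i => C i ω))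
          (fun v (j : Fin i) => v (Fin.castLE i.isLt.le j)) (fun v => v i) := by
        rw [entropyRV, measEntropy_eq_finEntropy, finEntropy_eq_sum_finCondEntropy hP]
    _ = ∑ i, entropyRV μ (C i) := Finset.sum_congr rfl fun i _ =>
        (finCondEntropy_eq_of_mul hP.2 (pushWeights_probMass_map_of_indepFun hV
          (hind.indepFun_finPrefix hC i))).trans (entropyRV_comp hV fun v => v i).symm

lemma condEntropyRV_pi_eq_sum [Fintype A] [StandardBorelSpace A] [Nonempty A]
    [IsFiniteMeasure μ] (hC : ∀ i, Measurable (C i)) {Y : Ω → β} (hY : Measurable Y) :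
    condEntropyRV μ (fun ω i => C i ω) Y = ∑ i : Fin n,
      condEntropyRV μ (C i) (fun ω => ((fun j : Fin i => C (Fin.castLE i.isLt.le j) ω), Y ω)) := by
  have hV : Measurable fun ω i => C i ω := measurable_pi_lambda _ hC
  calc condEntropyRV μ (fun ω i => C i ω) Y
      = ∫ y, finEntropy (probMass (condDistrib (fun ω i => C i ω) Y μ y)) ∂μ.map Y := by
        simp only [condEntropyRV, measEntropy_eq_finEntropy]
    _ = ∫ y, ∑ i : Fin n, finCondEntropy (probMass (condDistrib (fun ω i => C i ω) Y μ y))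
          (fun v (j : Fin i) => v (Fin.castLE i.isLt.le j)) (fun v => v i) ∂μ.map Y :=
        integral_congr_ae (.of_forall fun y =>
          finEntropy_eq_sum_finCondEntropy (probMass_mem_stdSimplex _))
    _ = _ := by
        rw [integral_finsetSum _ fun i _ => integrable_finCondEntropy_condDistrib _ _]
        exact Finset.sum_congr rfl fun i _ =>
          (condEntropyRV_comp_pair hV hY _ fun v => v i).symm

end Sequences

theorem stmt_4_general {Ω : Type*} [MeasurableSpace Ω] (μ : Measure Ω) [IsProbabilityMeasure μ]
    {β : Type*} [MeasurableSpace β]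
    (g : ℕ)
    (C : Fin g → Ω → Bool) (hC : ∀ i, Measurable (C i))
    (hindep : iIndepFun C μ)
    (Y : Ω → β) (hY : Measurable Y) :
    (1 / (g:ℝ)) * mutualInfoRV μ (fun ω (i : Fin g) => C i ω) Y
        - (1 / (g:ℝ)) * ∑ i : Fin g, mutualInfoRV μ (C i) Y
      = (1 / (g:ℝ)) * ∑ i ∈ Finset.univ.filter (fun i : Fin g => 0 < (i:ℕ)),
          condMutualInfoRV μ (C i)
            (fun ω (j : Fin (i:ℕ)) => C (Fin.castLE i.isLt.le j) ω) Y ∧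
    0 ≤ (1 / (g:ℝ)) * mutualInfoRV μ (fun ω (i : Fin g) => C i ω) Y
        - (1 / (g:ℝ)) * ∑ i : Fin g, mutualInfoRV μ (C i) Y := by
  have hV : Measurable fun ω (i : Fin g) => C i ω := measurable_pi_lambda _ hC
  have hcmi_nonneg : ∀ i : Fin g, 0 ≤ condMutualInfoRV μ (C i)
      (fun ω (j : Fin i) => C (Fin.castLE i.isLt.le j) ω) Y := fun i =>
    sub_nonneg.2 (condEntropyRV_comp_pair_le hV hY
      (fun v (j : Fin i) => v (Fin.castLE i.isLt.le j)) fun v => v i)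
  have hcmi_zero : ∀ i : Fin g, (i : ℕ) = 0 → condMutualInfoRV μ (C i)
      (fun ω (j : Fin i) => C (Fin.castLE i.isLt.le j) ω) Y = 0 := by
    intro i hi
    have : IsEmpty (Fin i) := by rw [hi]; infer_instance
    exact sub_eq_zero.2 (condEntropyRV_comp_pair_of_subsingleton hV hY
      (fun v (j : Fin i) => v (Fin.castLE i.isLt.le j)) fun v => v i).symm
  have hgap : mutualInfoRV μ (fun ω (i : Fin g) => C i ω) Y - ∑ i : Fin g, mutualInfoRV μ (C i) Y
      = ∑ i ∈ Finset.univ.filter (fun i : Fin g => 0 < (i:ℕ)),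
          condMutualInfoRV μ (C i) (fun ω (j : Fin i) => C (Fin.castLE i.isLt.le j) ω) Y := by
    rw [Finset.sum_filter_of_ne fun i _ hi => Nat.pos_of_ne_zero fun h0 => hi (hcmi_zero i h0)]
    simp only [mutualInfoRV, condMutualInfoRV, entropyRV_pi_eq_sum_of_iIndepFun hindep hC,
      condEntropyRV_pi_eq_sum hC hY, Finset.sum_sub_distrib]
    ring
  rw [← mul_sub, hgap]
  exact ⟨rfl, mul_nonneg (by positivity) (Finset.sum_nonneg fun i _ => hcmi_nonneg i)⟩

/-- For mutually independent bits `C₁,…,C_g` and channel output `Y`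
with values in a standard Borel space, the information loss from marginalizing group
probabilities to bit probabilities satisfies
`I_g − I_b = (1/g)·Σ_{i≥2} I(Cᵢ ; (C₁,…,C_{i−1}) | Y) ≥ 0`, where
`I_g := (1/g)·I(C₁,…,C_g ; Y)` and `I_b := (1/g)·Σᵢ I(Cᵢ ; Y)`. -/
theorem stmt_4 {Ω : Type*} [MeasurableSpace Ω] (μ : Measure Ω) [IsProbabilityMeasure μ]
    {β : Type*} [MeasurableSpace β] [StandardBorelSpace β]
    (g : ℕ)
    (C : Fin g → Ω → Bool) (hC : ∀ i, Measurable (C i))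
    (hindep : iIndepFun C μ)
    (Y : Ω → β) (hY : Measurable Y) :
    (1 / (g:ℝ)) * mutualInfoRV μ (fun ω (i : Fin g) => C i ω) Y
        - (1 / (g:ℝ)) * ∑ i : Fin g, mutualInfoRV μ (C i) Y
      = (1 / (g:ℝ)) * ∑ i ∈ Finset.univ.filter (fun i : Fin g => 0 < (i:ℕ)),
          condMutualInfoRV μ (C i)
            (fun ω (j : Fin (i:ℕ)) => C (Fin.castLE i.isLt.le j) ω) Y ∧
    0 ≤ (1 / (g:ℝ)) * mutualInfoRV μ (fun ω (i : Fin g) => C i ω) Y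
        - (1 / (g:ℝ)) * ∑ i : Fin g, mutualInfoRV μ (C i) Y :=
  stmt_4_general μ g C hC hindep Y hY
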